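/- arXiv:2102.02095 — 2 statements merged into one kernel-verified Lean document; each statement's English description precedes it below -/
import Mathlib

section
/- Let β > 0, α, δ ∈ ℝ, r > 0, L > 0, and let q : [0,L] → ℂ be continuous. Suppose w̃ : [0,L]×[0,∞) → ℂ is smooth and satisfies i w̃_t + iβ w̃_{xxx} + α w̃_{xx} + iδ w̃_x + i r w̃ = 0 on (0,L)×(0,∞), with w̃(0,t) = w̃(L,t) = 0 and w̃_x(L,t) = ∫₀ᴸ q(y) w̃(y,t) dy for all t ≥ 0. Set μ := r − (β/2) ∫₀ᴸ |q(y)|² dy. Then ‖w̃(·,t)‖₂ ≤ e^{−μ t} ‖w̃(·,0)‖₂ for all t ≥ 0. -/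
noncomputable section

open MeasureTheory

/-- Partial derivative in the first variable. -/
def pd1 (f : ℝ → ℝ → ℂ) : ℝ → ℝ → ℂ := fun x y => deriv (fun x' => f x' y) x

/-- Partial derivative in the second variable. -/
def pd2 (f : ℝ → ℝ → ℂ) : ℝ → ℝ → ℂ := fun x y => deriv (fun y' => f x y') y

/-- The L²(0,L) norm. -/
def L2norm (L : ℝ) (φ : ℝ → ℂ) : ℝ :=
  Real.sqrt (∫ x in (0:ℝ)..L, ‖φ x‖ ^ 2)

open Set

lemma hasDerivAt_pd1 {f : ℝ → ℝ → ℂ} (hf : ContDiff ℝ (⊤ : ℕ∞) (Function.uncurry f)) (x y : ℝ) :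
    HasDerivAt (fun x' => f x' y) (pd1 f x y) x := by
  have h1 : HasDerivAt (fun x' : ℝ => ((x', y) : ℝ × ℝ)) (1, 0) x :=
    (hasDerivAt_id x).prodMk (hasDerivAt_const x y)
  have h2 := (hf.differentiable (by simp) (x, y)).hasFDerivAt.comp_hasDerivAt x h1
  rw [show pd1 f x y = _ from h2.deriv]; exact h2

lemma hasDerivAt_pd2 {f : ℝ → ℝ → ℂ} (hf : ContDiff ℝ (⊤ : ℕ∞) (Function.uncurry f)) (x y : ℝ) :
    HasDerivAt (fun y' => f x y') (pd2 f x y) y := by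
  have h1 : HasDerivAt (fun y' : ℝ => ((x, y') : ℝ × ℝ)) (0, 1) y :=
    (hasDerivAt_const y x).prodMk (hasDerivAt_id y)
  have h2 := (hf.differentiable (by simp) (x, y)).hasFDerivAt.comp_hasDerivAt y h1
  rw [show pd2 f x y = _ from h2.deriv]; exact h2

lemma pd1_eq {f : ℝ → ℝ → ℂ} (hf : ContDiff ℝ (⊤ : ℕ∞) (Function.uncurry f)) (x y : ℝ) :
    pd1 f x y = fderiv ℝ (Function.uncurry f) (x, y) (1, 0) := by
  have h1 : HasDerivAt (fun x' : ℝ => ((x', y) : ℝ × ℝ)) (1, 0) x :=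
    (hasDerivAt_id x).prodMk (hasDerivAt_const x y)
  exact ((hf.differentiable (by simp) (x, y)).hasFDerivAt.comp_hasDerivAt x h1).deriv

lemma pd2_eq {f : ℝ → ℝ → ℂ} (hf : ContDiff ℝ (⊤ : ℕ∞) (Function.uncurry f)) (x y : ℝ) :
    pd2 f x y = fderiv ℝ (Function.uncurry f) (x, y) (0, 1) := by
  have h1 : HasDerivAt (fun y' : ℝ => ((x, y') : ℝ × ℝ)) (0, 1) y :=
    (hasDerivAt_const y x).prodMk (hasDerivAt_id y)
  exact ((hf.differentiable (by simp) (x, y)).hasFDerivAt.comp_hasDerivAt y h1).deriv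

lemma contDiff_pd1 {f : ℝ → ℝ → ℂ} (hf : ContDiff ℝ (⊤ : ℕ∞) (Function.uncurry f)) :
    ContDiff ℝ (⊤ : ℕ∞) (Function.uncurry (pd1 f)) := by
  have h : Function.uncurry (pd1 f) = fun p : ℝ × ℝ => fderiv ℝ (Function.uncurry f) p (1, 0) := by
    ext p; exact pd1_eq hf p.1 p.2
  rw [h]; exact (hf.fderiv_right (by simp)).clm_apply contDiff_const

lemma contDiff_pd2 {f : ℝ → ℝ → ℂ} (hf : ContDiff ℝ (⊤ : ℕ∞) (Function.uncurry f)) :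
    ContDiff ℝ (⊤ : ℕ∞) (Function.uncurry (pd2 f)) := by
  have h : Function.uncurry (pd2 f) = fun p : ℝ × ℝ => fderiv ℝ (Function.uncurry f) p (0, 1) := by
    ext p; exact pd2_eq hf p.1 p.2
  rw [h]; exact (hf.fderiv_right (by simp)).clm_apply contDiff_const

lemma cont_slice1 {f : ℝ → ℝ → ℂ} (h : Continuous (Function.uncurry f)) (t : ℝ) :
    Continuous fun x => f x t := h.comp (continuous_id.prodMk continuous_const)

lemma hasDerivAt_normSq_comp {g : ℝ → ℂ} {g' : ℂ} {t : ℝ} (h : HasDerivAt g g' t) :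
    HasDerivAt (fun s => Complex.normSq (g s)) (2 * ((starRingEnd ℂ) (g t) * g').re) t := by
  have hre : HasDerivAt (fun s => (g s).re) g'.re t :=
    Complex.reCLM.hasFDerivAt.comp_hasDerivAt t h
  have him : HasDerivAt (fun s => (g s).im) g'.im t :=
    Complex.imCLM.hasFDerivAt.comp_hasDerivAt t h
  have h2 := (hre.mul hre).add (him.mul him)
  have e1 : (fun s => Complex.normSq (g s))
      = fun s => (g s).re * (g s).re + (g s).im * (g s).im := by
    funext s; simp [Complex.normSq_apply]
  rw [e1]
  refine h2.congr_deriv ?_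
  simp [Complex.mul_re, Complex.conj_re, Complex.conj_im]; ring

/-- Cauchy–Schwarz for interval integrals of continuous functions. -/
lemma cs_interval {L : ℝ} (hL : 0 ≤ L) (f g : ℝ → ℝ)
    (hf : ContinuousOn f (Icc 0 L)) (hg : ContinuousOn g (Icc 0 L)) :
    (∫ x in (0:ℝ)..L, f x * g x) ^ 2 ≤ (∫ x in (0:ℝ)..L, f x ^ 2) * (∫ x in (0:ℝ)..L, g x ^ 2) := by
  have huIcc : uIcc (0:ℝ) L = Icc 0 L := uIcc_of_le hL
  have hif : ∀ h : ℝ → ℝ, ContinuousOn h (Icc 0 L) → IntervalIntegrable h volume 0 L := by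
    intro h hh; apply ContinuousOn.intervalIntegrable; rwa [huIcc]
  set A := ∫ x in (0:ℝ)..L, f x ^ 2 with hA
  set B := ∫ x in (0:ℝ)..L, f x * g x with hB
  set C := ∫ x in (0:ℝ)..L, g x ^ 2 with hC
  have key : ∀ lam : ℝ, 0 ≤ A * (lam * lam) + (2 * B) * lam + C := by
    intro lam
    have h0 : 0 ≤ ∫ x in (0:ℝ)..L, (lam * f x + g x) ^ 2 :=
      intervalIntegral.integral_nonneg hL (fun x _ => sq_nonneg _)
    have hexp : (∫ x in (0:ℝ)..L, (lam * f x + g x) ^ 2)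
        = A * (lam * lam) + (2 * B) * lam + C := by
      have e : ∀ x : ℝ, (lam * f x + g x) ^ 2
          = ((lam * lam) * f x ^ 2 + (2 * lam) * (f x * g x)) + g x ^ 2 := by intro x; ring
      simp_rw [e]
      rw [intervalIntegral.integral_add, intervalIntegral.integral_add,
        intervalIntegral.integral_const_mul, intervalIntegral.integral_const_mul]
      · ring
      · exact hif _ ((hf.pow 2).const_smul (lam*lam) |>.congr (by intro x _; simp [smul_eq_mul]))
      · exact hif _ (((hf.mul hg).const_smul (2*lam)).congr (by intro x _; simp [smul_eq_mul]))
      · exact hif _ ((((hf.pow 2).const_smul (lam*lam)).congr (by intro x _; simp [smul_eq_mul])).add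
          (((hf.mul hg).const_smul (2*lam)).congr (by intro x _; simp [smul_eq_mul])))
      · exact hif _ (hg.pow 2)
    linarith [h0, hexp.ge]
  have hd := discrim_le_zero key
  unfold discrim at hd
  nlinarith [hd]

theorem stmt4 (β α δ r L : ℝ) (hβ : 0 < β) (hr : 0 < r) (hL : 0 < L)
    (q : ℝ → ℂ) (hq : ContinuousOn q (Set.Icc (0:ℝ) L))
    (w : ℝ → ℝ → ℂ) (hw : ContDiff ℝ (⊤ : ℕ∞) (Function.uncurry w))
    (hpde : ∀ x ∈ Set.Ioo (0:ℝ) L, ∀ t : ℝ, 0 < t →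
      Complex.I * pd2 w x t + Complex.I * (β : ℂ) * pd1 (pd1 (pd1 w)) x t
        + (α : ℂ) * pd1 (pd1 w) x t + Complex.I * (δ : ℂ) * pd1 w x t
        + Complex.I * (r : ℂ) * w x t = 0)
    (hbc : ∀ t : ℝ, 0 ≤ t → w 0 t = 0 ∧ w L t = 0 ∧
      pd1 w L t = ∫ y in (0:ℝ)..L, q y * w y t) :
    ∀ t : ℝ, 0 ≤ t →
      L2norm L (fun x => w x t) ≤
        Real.exp (-(r - β / 2 * ∫ y in (0:ℝ)..L, ‖q y‖ ^ 2) * t)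
          * L2norm L (fun x => w x 0) := by
  have huIcc : uIcc (0:ℝ) L = Icc 0 L := uIcc_of_le hL.le
  set Q : ℝ := ∫ y in (0:ℝ)..L, ‖q y‖ ^ 2 with hQdef
  set E : ℝ → ℝ := fun t => ∫ x in (0:ℝ)..L, Complex.normSq (w x t) with hE_def
  set Ed : ℝ → ℝ := fun t => ∫ x in (0:ℝ)..L,
      2 * ((starRingEnd ℂ) (w x t) * pd2 w x t).re with hEd_def
  have hw1 : ContDiff ℝ (⊤ : ℕ∞) (Function.uncurry (pd1 w)) := contDiff_pd1 hw
  have hw2 : ContDiff ℝ (⊤ : ℕ∞) (Function.uncurry (pd1 (pd1 w))) := contDiff_pd1 hw1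
  have hw3 : ContDiff ℝ (⊤ : ℕ∞) (Function.uncurry (pd1 (pd1 (pd1 w)))) := contDiff_pd1 hw2
  have hcw := hw.continuous
  have hct := (contDiff_pd2 hw).continuous
  have hEnn : ∀ t, 0 ≤ E t := fun t =>
    intervalIntegral.integral_nonneg hL.le (fun x _ => Complex.normSq_nonneg _)
  -- Step A: derivative of the energy
  have hE : ∀ t0 : ℝ, HasDerivAt E (Ed t0) t0 := by
    intro t0
    have hψ : Continuous fun p : ℝ × ℝ =>
        2 * ((starRingEnd ℂ) (w p.2 p.1) * pd2 w p.2 p.1).re := by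
      apply continuous_const.mul
      exact Complex.continuous_re.comp
        ((Complex.continuous_conj.comp (hcw.comp continuous_swap)).mul (hct.comp continuous_swap))
    obtain ⟨C, hC⟩ := IsCompact.exists_bound_of_continuousOn
      ((isCompact_Icc.prod isCompact_Icc :
        IsCompact ((Icc (t0-1) (t0+1)) ×ˢ (Icc (0:ℝ) L)))) hψ.continuousOn
    have hslice : ∀ t : ℝ, Continuous fun x => 2 * ((starRingEnd ℂ) (w x t) * pd2 w x t).re :=
      fun t => hψ.comp (continuous_const.prodMk continuous_id)
    have main := intervalIntegral.hasDerivAt_integral_of_dominated_loc_of_deriv_le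
      (F := fun t x => Complex.normSq (w x t))
      (F' := fun t x => 2 * ((starRingEnd ℂ) (w x t) * pd2 w x t).re)
      (x₀ := t0) (s := Metric.ball t0 1) (a := (0:ℝ)) (b := L) (μ := volume)
      (bound := fun _ => C) (Metric.ball_mem_nhds t0 one_pos)
      (Filter.Eventually.of_forall fun t =>
        (Complex.continuous_normSq.comp (cont_slice1 hcw t)).aestronglyMeasurable)
      ((Complex.continuous_normSq.comp (cont_slice1 hcw t0)).intervalIntegrable _ _)
      ((hslice t0).aestronglyMeasurable)
      (ae_of_all _ (by
        intro x hx t ht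
        have hx' : x ∈ Icc (0:ℝ) L := Ioc_subset_Icc_self (by rwa [uIoc_of_le hL.le] at hx)
        have ht' : t ∈ Icc (t0-1) (t0+1) := by
          have := Real.ball_eq_Ioo t0 1 ▸ ht
          exact Ioo_subset_Icc_self this
        simpa using hC (t, x) ⟨ht', hx'⟩))
      intervalIntegrable_const
      (ae_of_all _ (by
        intro x hx t ht
        exact hasDerivAt_normSq_comp (hasDerivAt_pd2 hw x t)))
    exact main.2
  -- Step B: differential inequality
  have hkey : ∀ T : ℝ, 0 < T → Ed T ≤ (β * Q - 2*r) * E T := by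
    intro T hT
    set u : ℝ → ℂ := fun x => w x T with hu_def
    set u1 : ℝ → ℂ := fun x => pd1 w x T with hu1_def
    set u2 : ℝ → ℂ := fun x => pd1 (pd1 w) x T with hu2_def
    set u3 : ℝ → ℂ := fun x => pd1 (pd1 (pd1 w)) x T with hu3_def
    set ut : ℝ → ℂ := fun x => pd2 w x T with hut_def
    have hu : ∀ x, HasDerivAt u (u1 x) x := fun x => hasDerivAt_pd1 hw x T
    have hu1 : ∀ x, HasDerivAt u1 (u2 x) x := fun x => hasDerivAt_pd1 hw1 x T
    have hu2 : ∀ x, HasDerivAt u2 (u3 x) x := fun x => hasDerivAt_pd1 hw2 x T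
    have hcu : Continuous u := cont_slice1 hw.continuous T
    have hcu1 : Continuous u1 := cont_slice1 hw1.continuous T
    have hcu2 : Continuous u2 := cont_slice1 hw2.continuous T
    have hcu3 : Continuous u3 := cont_slice1 hw3.continuous T
    have hcut : Continuous ut := cont_slice1 hct T
    have hpdeT : ∀ x ∈ Icc (0:ℝ) L, ut x
        = -(β:ℂ) * u3 x + Complex.I * (α:ℂ) * u2 x - (δ:ℂ) * u1 x - (r:ℂ) * u x := by
      have hcl : IsClosed {x : ℝ | Complex.I * ut x + Complex.I * (β:ℂ) * u3 x
          + (α:ℂ) * u2 x + Complex.I * (δ:ℂ) * u1 x + Complex.I * (r:ℂ) * u x = 0} := by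
        apply isClosed_eq _ continuous_const
        fun_prop
      intro x hx
      have hx' : x ∈ closure (Ioo (0:ℝ) L) := by rwa [closure_Ioo hL.ne]
      have h0 : Complex.I * ut x + Complex.I * (β:ℂ) * u3 x
          + (α:ℂ) * u2 x + Complex.I * (δ:ℂ) * u1 x + Complex.I * (r:ℂ) * u x = 0 :=
        (hcl.closure_subset_iff.mpr (fun y hy => hpde y hy T hT)) hx'
      linear_combination (-Complex.I) * h0
        + (ut x + (β:ℂ)*u3 x + (δ:ℂ)*u1 x + (r:ℂ)*u x) * Complex.I_mul_I
    set FF : ℝ → ℝ := fun x => -β * ((starRingEnd ℂ) (u x) * u2 x).re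
        + β/2 * Complex.normSq (u1 x) - α * ((starRingEnd ℂ) (u x) * u1 x).im
        - δ/2 * Complex.normSq (u x) with hFF_def
    set Fd : ℝ → ℝ := fun x => -β * ((starRingEnd ℂ) (u x) * u3 x).re
        - α * ((starRingEnd ℂ) (u x) * u2 x).im
        - δ * ((starRingEnd ℂ) (u x) * u1 x).re with hFd_def
    have hFF : ∀ x, HasDerivAt FF (Fd x) x := by
      intro x
      have hconj : HasDerivAt (fun x => (starRingEnd ℂ) (u x)) ((starRingEnd ℂ) (u1 x)) x :=
        (hu x).star
      have hA : HasDerivAt (fun x => ((starRingEnd ℂ) (u x) * u2 x).re)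
          ((starRingEnd ℂ) (u1 x) * u2 x + (starRingEnd ℂ) (u x) * u3 x).re x :=
        Complex.reCLM.hasFDerivAt.comp_hasDerivAt x (hconj.mul (hu2 x))
      have hB : HasDerivAt (fun x => Complex.normSq (u1 x))
          (2 * ((starRingEnd ℂ) (u1 x) * u2 x).re) x := hasDerivAt_normSq_comp (hu1 x)
      have hC : HasDerivAt (fun x => ((starRingEnd ℂ) (u x) * u1 x).im)
          ((starRingEnd ℂ) (u1 x) * u1 x + (starRingEnd ℂ) (u x) * u2 x).im x :=
        Complex.imCLM.hasFDerivAt.comp_hasDerivAt x (hconj.mul (hu1 x))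
      have hD : HasDerivAt (fun x => Complex.normSq (u x))
          (2 * ((starRingEnd ℂ) (u x) * u1 x).re) x := hasDerivAt_normSq_comp (hu x)
      have htot := (((hA.const_mul (-β)).add (hB.const_mul (β/2))).sub (hC.const_mul α)).sub
        (hD.const_mul (δ/2))
      refine htot.congr_deriv ?_
      simp only [hFd_def]
      simp only [Complex.add_re, Complex.add_im, Complex.mul_re, Complex.mul_im,
        Complex.conj_re, Complex.conj_im, Complex.ofReal_re, Complex.ofReal_im]
      ring
    have hgid : ∀ x ∈ Icc (0:ℝ) L,
        2 * ((starRingEnd ℂ) (u x) * ut x).re = 2 * Fd x - 2 * r * Complex.normSq (u x) := by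
      intro x hx
      rw [hpdeT x hx]
      simp only [hFd_def]
      simp only [Complex.mul_re, Complex.mul_im, Complex.add_re, Complex.add_im,
        Complex.sub_re, Complex.sub_im, Complex.neg_re, Complex.neg_im,
        Complex.I_re, Complex.I_im, Complex.ofReal_re, Complex.ofReal_im,
        Complex.conj_re, Complex.conj_im, Complex.normSq_apply]
      ring
    have hcFd : Continuous Fd := by fun_prop
    have hcNu : Continuous fun x => Complex.normSq (u x) := Complex.continuous_normSq.comp hcu
    have hsplit : Ed T = 2 * (FF L - FF 0) - 2 * r * E T := by
      have h1 : Ed T = ∫ x in (0:ℝ)..L, (2 * Fd x - 2 * r * Complex.normSq (u x)) := by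
        apply intervalIntegral.integral_congr
        rw [huIcc]; exact fun x hx => hgid x hx
      rw [h1, intervalIntegral.integral_sub (f := fun x => 2 * Fd x) (g := fun x => 2 * r * Complex.normSq (u x))
          ((continuous_const.mul hcFd).intervalIntegrable _ _)
          ((continuous_const.mul hcNu).intervalIntegrable _ _),
        intervalIntegral.integral_const_mul, intervalIntegral.integral_const_mul,
        intervalIntegral.integral_eq_sub_of_hasDerivAt (fun x _ => hFF x)
          (hcFd.intervalIntegrable _ _)]
    obtain ⟨hw0, hwL, hwx⟩ := hbc T hT.le
    have hu0 : u 0 = 0 := hw0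
    have huL : u L = 0 := hwL
    have hFFL : FF L = β/2 * Complex.normSq (u1 L) := by
      simp only [hFF_def]; simp [huL]
    have hFF0 : FF 0 = β/2 * Complex.normSq (u1 0) := by
      simp only [hFF_def]; simp [hu0]
    have hETnn : 0 ≤ E T := hEnn T
    have hflux : Complex.normSq (u1 L) ≤ Q * E T := by
      have h1 : ‖u1 L‖
          ≤ ∫ y in (0:ℝ)..L, ‖q y‖ * ‖w y T‖ := by
        have he : u1 L = ∫ y in (0:ℝ)..L, q y * w y T := hwx
        rw [he]
        calc ‖∫ y in (0:ℝ)..L, q y * w y T‖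
            = ‖∫ y in (0:ℝ)..L, q y * w y T‖ := rfl
          _ ≤ ∫ y in (0:ℝ)..L, ‖q y * w y T‖ :=
              intervalIntegral.norm_integral_le_integral_norm hL.le
          _ = ∫ y in (0:ℝ)..L, ‖q y‖ * ‖w y T‖ := by
              apply intervalIntegral.integral_congr
              intro y _
              simp
      have h2 : (∫ y in (0:ℝ)..L, ‖q y‖ * ‖w y T‖) ^ 2 ≤ Q * E T := by
        have hc := cs_interval hL.le (fun y => ‖q y‖) (fun y => ‖w y T‖)
          (continuous_norm.comp_continuousOn hq)
          ((continuous_norm.comp hcu).continuousOn)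
        have e2 : (∫ y in (0:ℝ)..L, ‖w y T‖ ^ 2) = E T := by
          rw [hE_def]
          exact intervalIntegral.integral_congr fun y _ => Complex.sq_norm _
        rw [e2, ← hQdef] at hc
        exact hc
      have h3 : Complex.normSq (u1 L) = ‖u1 L‖ ^ 2 := (Complex.sq_norm _).symm
      rw [h3]
      refine le_trans (pow_le_pow_left₀ (norm_nonneg _) h1 2) h2
    have hFdiff : FF L - FF 0 ≤ β/2 * (Q * E T) := by
      rw [hFFL, hFF0]
      have := Complex.normSq_nonneg (u1 0)
      nlinarith [hflux]
    rw [hsplit]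
    calc 2 * (FF L - FF 0) - 2 * r * E T ≤ 2 * (β/2 * (Q * E T)) - 2 * r * E T := by linarith
      _ = (β * Q - 2*r) * E T := by ring
  -- Step C: Gronwall argument
  set μ : ℝ := r - β/2*Q with hμ
  have hEcont : Continuous E :=
    continuous_iff_continuousAt.mpr fun t => (hE t).continuousAt
  have hmono : ∀ s t : ℝ, 0 < s → s ≤ t →
      E t * Real.exp (2*μ*t) ≤ E s * Real.exp (2*μ*s) := by
    intro s t hs hst
    have hG : ∀ τ, HasDerivAt (fun τ => E τ * Real.exp (2*μ*τ))
        (Ed τ * Real.exp (2*μ*τ) + E τ * (Real.exp (2*μ*τ) * (2*μ))) τ := by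
      intro τ
      have h1 : HasDerivAt (fun τ : ℝ => 2*μ*τ) (2*μ) τ := by
        simpa using (hasDerivAt_id τ).const_mul (2*μ)
      exact (hE τ).mul h1.exp
    have hanti : AntitoneOn (fun τ => E τ * Real.exp (2*μ*τ)) (Icc s t) := by
      apply antitoneOn_of_deriv_nonpos (f := fun τ => E τ * Real.exp (2*μ*τ)) (convex_Icc s t)
        (hEcont.mul (Real.continuous_exp.comp (continuous_const.mul continuous_id))).continuousOn
      · intro x _
        exact ((hG x).differentiableAt).differentiableWithinAt
      · intro x hx
        rw [interior_Icc] at hx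
        rw [(hG x).deriv]
        have hx0 : 0 < x := lt_trans hs hx.1
        have h2 := mul_le_mul_of_nonneg_right (hkey x hx0) (Real.exp_pos (2*μ*x)).le
        have h4 : E x * (Real.exp (2*μ*x) * (2*μ))
            = (2*r - β*Q) * (E x * Real.exp (2*μ*x)) := by rw [hμ]; ring
        have h5 : (β * Q - 2 * r) * E x * Real.exp (2*μ*x)
            = (β*Q - 2*r) * (E x * Real.exp (2*μ*x)) := by ring
        rw [h5] at h2
        set z := E x * Real.exp (2*μ*x)
        linarith [h2, h4]
    exact hanti (left_mem_Icc.mpr hst) (right_mem_Icc.mpr hst) hst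
  have hE0 : ∀ t : ℝ, 0 < t → E t * Real.exp (2*μ*t) ≤ E 0 := by
    intro t ht
    have htend : Filter.Tendsto (fun s => E s * Real.exp (2*μ*s)) (nhdsWithin 0 (Ioi 0))
        (nhds (E 0 * Real.exp (2*μ*0))) :=
      ((hEcont.mul (Real.continuous_exp.comp (continuous_const.mul continuous_id))).tendsto 0).mono_left nhdsWithin_le_nhds
    have hev : ∀ᶠ s in nhdsWithin 0 (Ioi 0),
        E t * Real.exp (2*μ*t) ≤ E s * Real.exp (2*μ*s) := by
      filter_upwards [Ioo_mem_nhdsGT_of_mem (left_mem_Ico.mpr ht)] with s hs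
      exact hmono s t hs.1 hs.2.le
    have := ge_of_tendsto htend hev
    simpa using this
  -- conclusion
  intro t ht
  have hnorm : ∀ s : ℝ, L2norm L (fun x => w x s) = Real.sqrt (E s) := by
    intro s
    unfold L2norm
    congr 1
    rw [hE_def]
    exact intervalIntegral.integral_congr fun y _ => Complex.sq_norm _
  rw [hnorm t, hnorm 0, show -(r - β / 2 * ∫ y in (0:ℝ)..L, ‖q y‖ ^ 2) * t
    = -μ*t by rw [hμ, hQdef]]
  rcases eq_or_lt_of_le ht with h0 | h0
  · rw [← h0]; simp
  · have h1 : E t ≤ E 0 * Real.exp (-(2*μ*t)) := by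
      have h2 := hE0 t h0
      calc E t = E t * Real.exp (2*μ*t) * Real.exp (-(2*μ*t)) := by
            rw [mul_assoc, ← Real.exp_add]; simp
        _ ≤ E 0 * Real.exp (-(2*μ*t)) :=
            mul_le_mul_of_nonneg_right h2 (Real.exp_pos _).le
    have h4 : Real.sqrt (E t) ≤ Real.sqrt (E 0 * Real.exp (-(2*μ*t))) := Real.sqrt_le_sqrt h1
    refine le_trans h4 (le_of_eq ?_)
    rw [Real.sqrt_mul (hEnn 0)]
    have h5 : Real.exp (-(2*μ*t)) = Real.exp (-μ*t) ^ 2 := by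
      rw [sq, ← Real.exp_add]; ring_nf
    rw [h5, Real.sqrt_sq (Real.exp_pos _).le, mul_comm]
end
end

section
/- Let β > 0, α, δ ∈ ℝ, L > 0, T > 0, and let f : [0,L]×[0,T] → ℂ be continuous. There exists an absolute constant C > 0 (independent of β, α, δ, L, T, f, y) such that the following holds: if y : [0,L]×[0,T] → ℂ is smooth and satisfies i y_t + iβ y_{xxx} + α y_{xx} + iδ y_x = f(x,t) on (0,L)×(0,T), with y(0,t) = y(L,t) = y_x(L,t) = 0 for all t ∈ [0,T] and y(x,0) = 0 for all x ∈ [0,L], then sup_{t∈[0,T]} ∫₀ᴸ |y(x,t)|² dx + β ∫₀ᵀ |y_x(0,t)|² dt ≤ C ( ∫₀ᵀ ( ∫₀ᴸ |f(x,t)|² dx )^{1/2} dt )². -/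
noncomputable section
open MeasureTheory Function intervalIntegral

variable {u : ℝ → ℝ → ℂ}

lemma hasDerivAt_pd1_s9 (h : ContDiff ℝ (⊤ : ℕ∞) (uncurry u)) (x t : ℝ) :
    HasDerivAt (fun x' => u x' t) (pd1 u x t) x := by
  have hd : DifferentiableAt ℝ (fun x' => u x' t) x := by
    have : (fun x' => u x' t) = (uncurry u) ∘ (fun x' => (x', t)) := rfl
    rw [this]
    exact (h.differentiable (by simp)).differentiableAt.comp x
      ((differentiable_id.prodMk (differentiable_const t)) x)
  exact hd.hasDerivAt

lemma hasDerivAt_pd2_s9 (h : ContDiff ℝ (⊤ : ℕ∞) (uncurry u)) (x t : ℝ) :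
    HasDerivAt (fun t' => u x t') (pd2 u x t) t := by
  have hd : DifferentiableAt ℝ (fun t' => u x t') t := by
    have : (fun t' => u x t') = (uncurry u) ∘ (fun t' => (x, t')) := rfl
    rw [this]
    exact (h.differentiable (by simp)).differentiableAt.comp t
      (((differentiable_const x).prodMk differentiable_id) t)
  exact hd.hasDerivAt

lemma contDiff_pd1_s9 (h : ContDiff ℝ (⊤ : ℕ∞) (uncurry u)) : ContDiff ℝ (⊤ : ℕ∞) (uncurry (pd1 u)) := by
  have key : ∀ x t : ℝ, pd1 u x t = fderiv ℝ (uncurry u) (x, t) (1, 0) := by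
    intro x t
    have h1 : HasDerivAt (fun x' => u x' t) (fderiv ℝ (uncurry u) (x, t) (1, 0)) x := by
      have hu : HasFDerivAt (uncurry u) (fderiv ℝ (uncurry u) (x, t)) (x, t) :=
        (h.differentiable (by simp)).differentiableAt.hasFDerivAt
      have hι : HasDerivAt (fun x' : ℝ => ((x', t) : ℝ × ℝ)) (1, 0) x :=
        (hasDerivAt_id x).prodMk (hasDerivAt_const x t)
      exact hu.comp_hasDerivAt x hι
    exact h1.deriv.symm ▸ rfl
  have : uncurry (pd1 u) = fun p : ℝ × ℝ => fderiv ℝ (uncurry u) p (1, 0) := by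
    funext p; exact key p.1 p.2
  rw [this]
  exact (h.fderiv_right (by simp)).clm_apply contDiff_const

lemma contDiff_pd2_s9 (h : ContDiff ℝ (⊤ : ℕ∞) (uncurry u)) : ContDiff ℝ (⊤ : ℕ∞) (uncurry (pd2 u)) := by
  have key : ∀ x t : ℝ, pd2 u x t = fderiv ℝ (uncurry u) (x, t) (0, 1) := by
    intro x t
    have h1 : HasDerivAt (fun t' => u x t') (fderiv ℝ (uncurry u) (x, t) (0, 1)) t := by
      have hu : HasFDerivAt (uncurry u) (fderiv ℝ (uncurry u) (x, t)) (x, t) :=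
        (h.differentiable (by simp)).differentiableAt.hasFDerivAt
      have hι : HasDerivAt (fun t' : ℝ => ((x, t') : ℝ × ℝ)) (0, 1) t :=
        (hasDerivAt_const t x).prodMk (hasDerivAt_id t)
      exact hu.comp_hasDerivAt t hι
    exact h1.deriv.symm ▸ rfl
  have : uncurry (pd2 u) = fun p : ℝ × ℝ => fderiv ℝ (uncurry u) p (0, 1) := by
    funext p; exact key p.1 p.2
  rw [this]
  exact (h.fderiv_right (by simp)).clm_apply contDiff_const

lemma slice1_cont {v : ℝ → ℝ → ℂ} (h : Continuous (uncurry v)) (t : ℝ) :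
    Continuous (fun x => v x t) :=
  h.comp (continuous_id.prodMk continuous_const)

lemma hasDerivAt_starRingEnd {a : ℝ → ℂ} {a' : ℂ} {x : ℝ} (h : HasDerivAt a a' x) :
    HasDerivAt (fun x => (starRingEnd ℂ) (a x)) ((starRingEnd ℂ) a') x := by
  have := Complex.conjCLE.toContinuousLinearMap.hasFDerivAt.comp_hasDerivAt x h
  simpa [Function.comp_def] using this

lemma ibp_core {L : ℝ} {a b a' b' : ℝ → ℂ}
    (ha : ∀ x, HasDerivAt a (a' x) x) (hb : ∀ x, HasDerivAt b (b' x) x)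
    (hca : Continuous a) (hcb : Continuous b) (hca' : Continuous a') (hcb' : Continuous b') :
    ∫ x in (0:ℝ)..L, (a' x * b x + a x * b' x) = a L * b L - a 0 * b 0 :=
  integral_eq_sub_of_hasDerivAt (fun x _ => (ha x).mul (hb x))
    (((hca'.mul hcb).add (hca.mul hcb')).intervalIntegrable 0 L)

/-- interval-integral commutes with conj -/
lemma intervalIntegral_conj {g : ℝ → ℂ} (hg : Continuous g) {a b : ℝ} :
    ∫ x in a..b, (starRingEnd ℂ) (g x) = (starRingEnd ℂ) (∫ x in a..b, g x) := by
  have := Complex.conjCLE.toContinuousLinearMap.intervalIntegral_comp_comm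
    (μ := volume) (a := a) (b := b) (hg.intervalIntegrable a b)
  simpa using this

lemma intervalIntegral_re {g : ℝ → ℂ} (hg : Continuous g) {a b : ℝ} :
    ∫ x in a..b, (g x).re = (∫ x in a..b, g x).re := by
  have := Complex.reCLM.intervalIntegral_comp_comm
    (μ := volume) (a := a) (b := b) (hg.intervalIntegrable a b)
  simpa using this

lemma intervalIntegral_im {g : ℝ → ℂ} (hg : Continuous g) {a b : ℝ} :
    ∫ x in a..b, (g x).im = (∫ x in a..b, g x).im := by
  have := Complex.imCLM.intervalIntegral_comp_comm
    (μ := volume) (a := a) (b := b) (hg.intervalIntegrable a b)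
  simpa using this

/-- The key spatial integration-by-parts identity. -/
lemma spatial_main (hu : ContDiff ℝ (⊤ : ℕ∞) (uncurry u)) (β α δ L s : ℝ)
    (h0 : u 0 s = 0) (hL : u L s = 0) (h1L : pd1 u L s = 0) :
    ∫ x in (0:ℝ)..L, (2 * ((starRingEnd ℂ) (u x s) *
        (-(β:ℂ) * pd1 (pd1 (pd1 u)) x s + Complex.I * (α:ℂ) * pd1 (pd1 u) x s
          - (δ:ℂ) * pd1 u x s)).re)
      = -β * ‖pd1 u 0 s‖ ^ 2 := by
  set u1 := pd1 u with hu1def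
  set u2 := pd1 (pd1 u) with hu2def
  set u3 := pd1 (pd1 (pd1 u)) with hu3def
  have hU1 : ContDiff ℝ (⊤ : ℕ∞) (uncurry u1) := contDiff_pd1_s9 hu
  have hU2 : ContDiff ℝ (⊤ : ℕ∞) (uncurry u2) := contDiff_pd1_s9 hU1
  have hU3 : ContDiff ℝ (⊤ : ℕ∞) (uncurry u3) := contDiff_pd1_s9 hU2
  have c0 : Continuous (fun x => u x s) := slice1_cont hu.continuous s
  have c1 : Continuous (fun x => u1 x s) := slice1_cont hU1.continuous s
  have c2 : Continuous (fun x => u2 x s) := slice1_cont hU2.continuous s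
  have c3 : Continuous (fun x => u3 x s) := slice1_cont hU3.continuous s
  have cc0 : Continuous (fun x => (starRingEnd ℂ) (u x s)) := Complex.continuous_conj.comp c0
  have cc1 : Continuous (fun x => (starRingEnd ℂ) (u1 x s)) := Complex.continuous_conj.comp c1
  have d0 : ∀ x, HasDerivAt (fun x' => u x' s) (u1 x s) x := fun x => hasDerivAt_pd1_s9 hu x s
  have d1 : ∀ x, HasDerivAt (fun x' => u1 x' s) (u2 x s) x := fun x => hasDerivAt_pd1_s9 hU1 x s
  have d2 : ∀ x, HasDerivAt (fun x' => u2 x' s) (u3 x s) x := fun x => hasDerivAt_pd1_s9 hU2 x s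
  have dc0 : ∀ x, HasDerivAt (fun x' => (starRingEnd ℂ) (u x' s)) ((starRingEnd ℂ) (u1 x s)) x :=
    fun x => hasDerivAt_starRingEnd (d0 x)
  have dc1 : ∀ x, HasDerivAt (fun x' => (starRingEnd ℂ) (u1 x' s)) ((starRingEnd ℂ) (u2 x s)) x :=
    fun x => hasDerivAt_starRingEnd (d1 x)
  -- the four IBP identities
  have ibp1 : ∫ x in (0:ℝ)..L,
      ((starRingEnd ℂ) (u1 x s) * u2 x s + (starRingEnd ℂ) (u x s) * u3 x s) = 0 := by
    rw [ibp_core dc0 d2 cc0 c2 cc1 c3, hL, h0]; simp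
  have ibp2 : ∫ x in (0:ℝ)..L,
      ((starRingEnd ℂ) (u2 x s) * u1 x s + (starRingEnd ℂ) (u1 x s) * u2 x s)
        = -((‖u1 0 s‖ ^ 2 : ℝ) : ℂ) := by
    rw [ibp_core dc1 d1 cc1 c1 (Complex.continuous_conj.comp c2) c2, h1L]
    simp [Complex.conj_mul']
  have ibp3 : ∫ x in (0:ℝ)..L,
      ((starRingEnd ℂ) (u1 x s) * u1 x s + (starRingEnd ℂ) (u x s) * u2 x s) = 0 := by
    rw [ibp_core dc0 d1 cc0 c1 cc1 c2, hL, h0]; simp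
  have ibp4 : ∫ x in (0:ℝ)..L,
      ((starRingEnd ℂ) (u1 x s) * u x s + (starRingEnd ℂ) (u x s) * u1 x s) = 0 := by
    rw [ibp_core dc0 d0 cc0 c0 cc1 c1, hL, h0]; simp
  -- integrabilities
  have i11 : IntervalIntegrable (fun x => (starRingEnd ℂ) (u1 x s) * u2 x s) volume 0 L :=
    (cc1.mul c2).intervalIntegrable 0 L
  have i03 : IntervalIntegrable (fun x => (starRingEnd ℂ) (u x s) * u3 x s) volume 0 L :=
    (cc0.mul c3).intervalIntegrable 0 L
  have i02 : IntervalIntegrable (fun x => (starRingEnd ℂ) (u x s) * u2 x s) volume 0 L :=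
    (cc0.mul c2).intervalIntegrable 0 L
  have i01 : IntervalIntegrable (fun x => (starRingEnd ℂ) (u x s) * u1 x s) volume 0 L :=
    (cc0.mul c1).intervalIntegrable 0 L
  have i10 : IntervalIntegrable (fun x => (starRingEnd ℂ) (u1 x s) * u x s) volume 0 L :=
    (cc1.mul c0).intervalIntegrable 0 L
  have i22 : IntervalIntegrable (fun x => (starRingEnd ℂ) (u2 x s) * u1 x s) volume 0 L :=
    ((Complex.continuous_conj.comp c2).mul c1).intervalIntegrable 0 L
  have i1c1 : IntervalIntegrable (fun x => (starRingEnd ℂ) (u1 x s) * u1 x s) volume 0 L :=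
    (cc1.mul c1).intervalIntegrable 0 L
  set A' := ∫ x in (0:ℝ)..L, (starRingEnd ℂ) (u1 x s) * u2 x s with hA'
  set A := ∫ x in (0:ℝ)..L, (starRingEnd ℂ) (u x s) * u3 x s with hA
  set B := ∫ x in (0:ℝ)..L, (starRingEnd ℂ) (u x s) * u2 x s with hB
  set D := ∫ x in (0:ℝ)..L, (starRingEnd ℂ) (u x s) * u1 x s with hD
  rw [integral_add i11 i03] at ibp1
  rw [integral_add i22 i11] at ibp2
  rw [integral_add i1c1 i02] at ibp3
  rw [integral_add i10 i01] at ibp4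
  have hAval : A = -A' := by linear_combination ibp1
  -- Re A' = -|u1 0 s|^2 / 2
  have hconjA' : (∫ x in (0:ℝ)..L, (starRingEnd ℂ) (u2 x s) * u1 x s) = (starRingEnd ℂ) A' := by
    rw [hA', ← intervalIntegral_conj (g := fun x => (starRingEnd ℂ) (u1 x s) * u2 x s) (cc1.mul c2)]
    congr 1; funext x
    rw [map_mul, RingHomCompTriple.comp_apply, RingHom.id_apply, mul_comm]
  rw [hconjA'] at ibp2
  have hA're : A'.re = -(‖u1 0 s‖ ^ 2) / 2 := by
    have h := congrArg Complex.re ibp2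
    rw [← hA'] at h
    simp only [Complex.add_re, Complex.conj_re, Complex.neg_re, Complex.ofReal_re] at h
    linarith
  -- Im B = 0
  have hBim : B.im = 0 := by
    have h3 : B = -(∫ x in (0:ℝ)..L, (starRingEnd ℂ) (u1 x s) * u1 x s) := by
      linear_combination ibp3
    have : (∫ x in (0:ℝ)..L, (starRingEnd ℂ) (u1 x s) * u1 x s)
        = ((∫ x in (0:ℝ)..L, ‖u1 x s‖ ^ 2 : ℝ) : ℂ) := by
      rw [← intervalIntegral.integral_ofReal]
      congr 1; funext x; rw [Complex.conj_mul']
      push_cast; ring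
    rw [h3, this]
    simp
  -- Re D = 0
  have hconjD : (∫ x in (0:ℝ)..L, (starRingEnd ℂ) (u1 x s) * u x s) = (starRingEnd ℂ) D := by
    rw [hD, ← intervalIntegral_conj (g := fun x => (starRingEnd ℂ) (u x s) * u1 x s) (cc0.mul c1)]
    congr 1; funext x
    rw [map_mul, RingHomCompTriple.comp_apply, RingHom.id_apply, mul_comm]
  rw [hconjD] at ibp4
  have hDre : D.re = 0 := by
    have h := congrArg Complex.re ibp4
    rw [← hD] at h
    simp only [Complex.add_re, Complex.conj_re, Complex.zero_re] at h
    linarith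
  -- now compute the LHS
  have hgcont : Continuous (fun x => (starRingEnd ℂ) (u x s) *
      (-(β:ℂ) * u3 x s + Complex.I * (α:ℂ) * u2 x s - (δ:ℂ) * u1 x s)) := by
    apply cc0.mul
    exact ((continuous_const.mul c3).add (continuous_const.mul c2)).sub (continuous_const.mul c1)
  have step1 : ∫ x in (0:ℝ)..L, (2 * ((starRingEnd ℂ) (u x s) *
      (-(β:ℂ) * u3 x s + Complex.I * (α:ℂ) * u2 x s - (δ:ℂ) * u1 x s)).re)
      = 2 * (∫ x in (0:ℝ)..L, (starRingEnd ℂ) (u x s) *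
        (-(β:ℂ) * u3 x s + Complex.I * (α:ℂ) * u2 x s - (δ:ℂ) * u1 x s)).re := by
    rw [← intervalIntegral_re hgcont, intervalIntegral.integral_const_mul]
  have step2 : (∫ x in (0:ℝ)..L, (starRingEnd ℂ) (u x s) *
      (-(β:ℂ) * u3 x s + Complex.I * (α:ℂ) * u2 x s - (δ:ℂ) * u1 x s))
      = -(β:ℂ) * A + Complex.I * (α:ℂ) * B - (δ:ℂ) * D := by
    have e1 : ∀ x : ℝ, (starRingEnd ℂ) (u x s) *
        (-(β:ℂ) * u3 x s + Complex.I * (α:ℂ) * u2 x s - (δ:ℂ) * u1 x s)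
        = -(β:ℂ) * ((starRingEnd ℂ) (u x s) * u3 x s)
          + Complex.I * (α:ℂ) * ((starRingEnd ℂ) (u x s) * u2 x s)
          - (δ:ℂ) * ((starRingEnd ℂ) (u x s) * u1 x s) := by intro x; ring
    simp_rw [e1]
    rw [integral_sub (((i03.const_mul _).add (i02.const_mul _))) (i01.const_mul _),
      integral_add (i03.const_mul _) (i02.const_mul _),
      intervalIntegral.integral_const_mul, intervalIntegral.integral_const_mul,
      intervalIntegral.integral_const_mul]
  rw [step1, step2]
  have : (-(β:ℂ) * A + Complex.I * (α:ℂ) * B - (δ:ℂ) * D).re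
      = -β * A.re - α * B.im - δ * D.re := by
    simp [Complex.add_re, Complex.sub_re, Complex.mul_re]
    ring
  rw [this, hAval, hBim, hDre]
  simp [Complex.neg_re]
  rw [hA're]
  ring

lemma hasDerivAt_sqAbs (hu : ContDiff ℝ (⊤ : ℕ∞) (uncurry u)) (x s : ℝ) :
    HasDerivAt (fun s' => ‖u x s'‖ ^ 2)
      (2 * ((starRingEnd ℂ) (u x s) * pd2 u x s).re) s := by
  have h1 : HasDerivAt (fun s' => (starRingEnd ℂ) (u x s') * u x s')
      ((starRingEnd ℂ) (pd2 u x s) * u x s + (starRingEnd ℂ) (u x s) * pd2 u x s) s :=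
    (hasDerivAt_starRingEnd (hasDerivAt_pd2_s9 hu x s)).mul (hasDerivAt_pd2_s9 hu x s)
  have h2 : HasDerivAt (fun s' => ((starRingEnd ℂ) (u x s') * u x s').re)
      (((starRingEnd ℂ) (pd2 u x s) * u x s + (starRingEnd ℂ) (u x s) * pd2 u x s).re) s :=
    Complex.reCLM.hasFDerivAt.comp_hasDerivAt s h1
  have e1 : (fun s' => ((starRingEnd ℂ) (u x s') * u x s').re)
      = fun s' => ‖u x s'‖ ^ 2 := by
    funext s'
    rw [Complex.conj_mul', ← Complex.ofReal_pow, Complex.ofReal_re]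
  rw [e1] at h2
  convert h2 using 1
  simp [Complex.add_re, Complex.mul_re, Complex.conj_re, Complex.conj_im]
  ring


lemma fubini_box {F : ℝ → ℝ → ℝ} (hF : Continuous (uncurry F)) {L t : ℝ} (hL : 0 ≤ L) (ht : 0 ≤ t) :
    ∫ x in (0:ℝ)..L, (∫ s in (0:ℝ)..t, F x s) = ∫ s in (0:ℝ)..t, (∫ x in (0:ℝ)..L, F x s) := by
  rw [intervalIntegral.integral_of_le hL, intervalIntegral.integral_of_le ht]
  simp_rw [intervalIntegral.integral_of_le ht, intervalIntegral.integral_of_le hL]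
  apply integral_integral_swap
  rw [Measure.prod_restrict]
  apply (hF.continuousOn.integrableOn_compact (isCompact_Icc.prod isCompact_Icc)).mono_set
  exact Set.prod_mono Set.Ioc_subset_Icc_self Set.Ioc_subset_Icc_self

lemma cauchy_schwarz_box {a b : ℝ → ℝ} (ha : Continuous a) (hb : Continuous b)
    (hna : ∀ x, 0 ≤ a x) (hnb : ∀ x, 0 ≤ b x) {L : ℝ} (hL : 0 ≤ L) :
    ∫ x in (0:ℝ)..L, a x * b x ≤
      Real.sqrt (∫ x in (0:ℝ)..L, a x ^ 2) * Real.sqrt (∫ x in (0:ℝ)..L, b x ^ 2) := by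
  rw [intervalIntegral.integral_of_le hL, intervalIntegral.integral_of_le hL,
    intervalIntegral.integral_of_le hL]
  set μ := volume.restrict (Set.Ioc (0:ℝ) L) with hμ
  haveI : IsFiniteMeasure μ := ⟨by
    rw [hμ, Measure.restrict_apply_univ]; exact measure_Ioc_lt_top⟩
  have hmem : ∀ (c : ℝ → ℝ), Continuous c → MemLp c (ENNReal.ofReal 2) μ := by
    intro c hc
    obtain ⟨C, hC⟩ := (isCompact_Icc (a := (0:ℝ)) (b := L)).exists_bound_of_continuousOn
      hc.continuousOn
    refine MemLp.of_bound hc.aestronglyMeasurable C ?_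
    rw [ae_restrict_iff' measurableSet_Ioc]
    exact Filter.Eventually.of_forall fun x hx => hC x (Set.Ioc_subset_Icc_self hx)
  have hconj : Real.HolderConjugate 2 2 := by
    rw [Real.holderConjugate_iff]; norm_num
  have key := integral_mul_le_Lp_mul_Lq_of_nonneg (μ := μ) hconj
    (Filter.Eventually.of_forall hna) (Filter.Eventually.of_forall hnb)
    (hmem a ha) (hmem b hb)
  have e2 : ∀ (c : ℝ → ℝ), (∀ x, 0 ≤ c x) → (∫ x, c x ^ (2:ℝ) ∂μ) ^ ((1:ℝ)/2)
      = Real.sqrt (∫ x, c x ^ 2 ∂μ) := by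
    intro c hc
    have : (fun x => c x ^ (2:ℝ)) = fun x => c x ^ 2 := by
      funext x
      rw [← Real.rpow_natCast (c x) 2]; norm_num
    rw [this, Real.sqrt_eq_rpow]
  rw [e2 a hna, e2 b hnb] at key
  exact key


theorem stmt9 :
    ∃ C : ℝ, 0 < C ∧
      ∀ β α δ L T : ℝ, 0 < β → 0 < L → 0 < T →
      ∀ f : ℝ → ℝ → ℂ,
        ContinuousOn (Function.uncurry f) (Set.Icc (0:ℝ) L ×ˢ Set.Icc (0:ℝ) T) →
      ∀ y : ℝ → ℝ → ℂ,
        ContDiff ℝ (⊤ : ℕ∞) (Function.uncurry y) →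
        (∀ x ∈ Set.Ioo (0:ℝ) L, ∀ t ∈ Set.Ioo (0:ℝ) T,
          Complex.I * pd2 y x t + Complex.I * (β : ℂ) * pd1 (pd1 (pd1 y)) x t
            + (α : ℂ) * pd1 (pd1 y) x t + Complex.I * (δ : ℂ) * pd1 y x t = f x t) →
        (∀ t ∈ Set.Icc (0:ℝ) T, y 0 t = 0 ∧ y L t = 0 ∧ pd1 y L t = 0) →
        (∀ x ∈ Set.Icc (0:ℝ) L, y x 0 = 0) →
        (⨆ t : Set.Icc (0:ℝ) T, ∫ x in (0:ℝ)..L, ‖y x t.1‖ ^ 2)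
          + β * (∫ t in (0:ℝ)..T, ‖pd1 y 0 t‖ ^ 2)
          ≤ C * (∫ t in (0:ℝ)..T,
              Real.sqrt (∫ x in (0:ℝ)..L, ‖f x t‖ ^ 2)) ^ 2 := by
  refine ⟨8, by norm_num, ?_⟩
  intro β α δ L T hβ hL hT f hf y hy heq hbc hini
  -- Tietze extension of f
  obtain ⟨g, hgc, hgeq⟩ : ∃ g : ℝ × ℝ → ℂ, Continuous g ∧
      ∀ p ∈ (Set.Icc (0:ℝ) L ×ˢ Set.Icc (0:ℝ) T), g p = uncurry f p := by
    obtain ⟨g, hg⟩ := ContinuousMap.exists_restrict_eq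
      (Y := ℂ) (X := ℝ × ℝ) (s := Set.Icc (0:ℝ) L ×ˢ Set.Icc (0:ℝ) T)
      ((isCompact_Icc.prod isCompact_Icc).isClosed) ⟨_, hf.restrict⟩
    exact ⟨g, g.continuous, fun p hp => congrFun (congrArg DFunLike.coe hg) ⟨p, hp⟩⟩
  -- continuity of derivatives of y
  have hY1 : ContDiff ℝ (⊤ : ℕ∞) (uncurry (pd1 y)) := contDiff_pd1_s9 hy
  have hY2 : ContDiff ℝ (⊤ : ℕ∞) (uncurry (pd1 (pd1 y))) := contDiff_pd1_s9 hY1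
  have hY3 : ContDiff ℝ (⊤ : ℕ∞) (uncurry (pd1 (pd1 (pd1 y)))) := contDiff_pd1_s9 hY2
  have hYt : ContDiff ℝ (⊤ : ℕ∞) (uncurry (pd2 y)) := contDiff_pd2_s9 hy
  -- main objects
  set E : ℝ → ℝ := fun t => ∫ x in (0:ℝ)..L, ‖y x t‖ ^ 2 with hEdef
  set Q : ℝ → ℂ := fun s => ∫ x in (0:ℝ)..L, (starRingEnd ℂ) (y x s) * g (x, s) with hQdef
  set FF : ℝ → ℝ := fun s => ∫ x in (0:ℝ)..L, ‖g (x, s)‖ ^ 2 with hFdef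
  set R : ℝ → ℝ → ℝ := fun x s => 2 * ((starRingEnd ℂ) (y x s) * pd2 y x s).re with hRdef
  set W : ℝ → ℝ := fun s => ∫ x in (0:ℝ)..L, R x s with hWdef
  set P : ℝ → ℝ := fun s => ‖pd1 y 0 s‖ ^ 2 with hPdef
  have hyc : Continuous (uncurry y) := hy.continuous
  have hycsw : Continuous (uncurry y ∘ Prod.swap) := hyc.comp continuous_swap
  -- continuity facts
  have hEcont : Continuous E := by
    apply intervalIntegral.continuous_parametric_intervalIntegral_of_continuous'
    exact (continuous_norm.comp hycsw).pow 2
  have hQcont : Continuous Q := by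
    apply intervalIntegral.continuous_parametric_intervalIntegral_of_continuous'
    exact (Complex.continuous_conj.comp hycsw).mul (hgc.comp continuous_swap)
  have hFcont : Continuous FF := by
    apply intervalIntegral.continuous_parametric_intervalIntegral_of_continuous'
    exact (continuous_norm.comp (hgc.comp continuous_swap)).pow 2
  have hPcont : Continuous P := by
    have : Continuous (fun s => pd1 y 0 s) :=
      hY1.continuous.comp (continuous_const.prodMk continuous_id)
    exact (continuous_norm.comp this).pow 2
  have hRcont : Continuous (uncurry R) := by
    have h1 : Continuous (fun p : ℝ × ℝ => (starRingEnd ℂ) (y p.1 p.2) * pd2 y p.1 p.2) :=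
      (Complex.continuous_conj.comp hyc).mul hYt.continuous
    exact continuous_const.mul (Complex.continuous_re.comp h1)
  have hE0 : ∀ t, 0 ≤ E t := fun t =>
    intervalIntegral.integral_nonneg hL.le (fun x _ => sq_nonneg _)
  have hF0 : ∀ s, 0 ≤ FF s := fun s =>
    intervalIntegral.integral_nonneg hL.le (fun x _ => sq_nonneg _)
  have hP0 : ∀ s, 0 ≤ P s := fun s => sq_nonneg _
  -- Step A : E t = ∫ s in 0..t, W s  for t ∈ [0,T]
  have stepA : ∀ t ∈ Set.Icc (0:ℝ) T, E t = ∫ s in (0:ℝ)..t, W s := by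
    intro t ht
    have h1 : E t = ∫ x in (0:ℝ)..L, (∫ s in (0:ℝ)..t, R x s) := by
      apply intervalIntegral.integral_congr
      intro x hx
      rw [Set.uIcc_of_le hL.le] at hx
      show ‖y x t‖ ^ 2 = ∫ s in (0:ℝ)..t, R x s
      have hftc : ∫ s in (0:ℝ)..t, R x s
          = ‖y x t‖ ^ 2 - ‖y x 0‖ ^ 2 := by
        apply intervalIntegral.integral_eq_sub_of_hasDerivAt
          (fun s _ => hasDerivAt_sqAbs hy x s)
        exact ((hRcont.comp (continuous_const.prodMk continuous_id)).intervalIntegrable 0 t)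
      rw [hftc, hini x hx]
      simp
    rw [h1, fubini_box hRcont hL.le ht.1]
  -- Step B : for s ∈ (0,T), W s = 2 * (-I * Q s).re - β * P s
  have stepB : ∀ s ∈ Set.Ioo (0:ℝ) T, W s = 2 * (-Complex.I * Q s).re - β * P s := by
    intro s hs
    have hsIcc : s ∈ Set.Icc (0:ℝ) T := ⟨hs.1.le, hs.2.le⟩
    obtain ⟨hb0, hbL, hb1L⟩ := hbc s hsIcc
    -- pointwise rewriting of pd2 on the open interval
    have hpd2 : ∀ x ∈ Set.Ioo (0:ℝ) L, pd2 y x s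
        = -Complex.I * g (x, s) + (-(β:ℂ) * pd1 (pd1 (pd1 y)) x s
            + Complex.I * (α:ℂ) * pd1 (pd1 y) x s - (δ:ℂ) * pd1 y x s) := by
      intro x hx
      have h := heq x hx s hs
      have hgfx : g (x, s) = f x s := hgeq (x, s)
        ⟨Set.Ioo_subset_Icc_self hx, hsIcc⟩
      rw [← hgfx] at h
      linear_combination (-Complex.I) * h
        + (pd2 y x s + (β:ℂ) * pd1 (pd1 (pd1 y)) x s + (δ:ℂ) * pd1 y x s) * Complex.I_sq
    -- W s equals the integral of the substituted integrand
    have c0 : Continuous (fun x => y x s) := slice1_cont hyc s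
    have cc0 : Continuous (fun x => (starRingEnd ℂ) (y x s)) := Complex.continuous_conj.comp c0
    have cg : Continuous (fun x => g (x, s)) := hgc.comp (continuous_id.prodMk continuous_const)
    have c1 : Continuous (fun x => pd1 y x s) := slice1_cont hY1.continuous s
    have c2 : Continuous (fun x => pd1 (pd1 y) x s) := slice1_cont hY2.continuous s
    have c3 : Continuous (fun x => pd1 (pd1 (pd1 y)) x s) := slice1_cont hY3.continuous s
    have cV1 : Continuous (fun x => 2 * ((starRingEnd ℂ) (y x s) * (-Complex.I * g (x, s))).re) :=
      continuous_const.mul (Complex.continuous_re.comp (cc0.mul (continuous_const.mul cg)))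
    have cV2 : Continuous (fun x => 2 * ((starRingEnd ℂ) (y x s) *
        (-(β:ℂ) * pd1 (pd1 (pd1 y)) x s + Complex.I * (α:ℂ) * pd1 (pd1 y) x s
          - (δ:ℂ) * pd1 y x s)).re) := by
      apply continuous_const.mul
      apply Complex.continuous_re.comp
      apply cc0.mul
      exact ((continuous_const.mul c3).add (continuous_const.mul c2)).sub
        (continuous_const.mul c1)
    have h1 : W s = ∫ x in (0:ℝ)..L,
        (2 * ((starRingEnd ℂ) (y x s) * (-Complex.I * g (x, s))).re
          + 2 * ((starRingEnd ℂ) (y x s) * (-(β:ℂ) * pd1 (pd1 (pd1 y)) x s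
            + Complex.I * (α:ℂ) * pd1 (pd1 y) x s - (δ:ℂ) * pd1 y x s)).re) := by
      rw [hWdef]
      apply intervalIntegral.integral_congr_ae
      have hmu : ∀ᵐ x : ℝ, x ≠ L := by
        rw [ae_iff]
        simpa using volume_singleton (a := L)
      filter_upwards [hmu] with x hxne hxmem
      rw [Set.uIoc_of_le hL.le] at hxmem
      have hxIoo : x ∈ Set.Ioo (0:ℝ) L := ⟨hxmem.1, lt_of_le_of_ne hxmem.2 hxne⟩
      rw [hRdef]
      simp only
      rw [hpd2 x hxIoo]
      rw [mul_add, Complex.add_re]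
      ring
    rw [h1, intervalIntegral.integral_add (cV1.intervalIntegrable 0 L)
      (cV2.intervalIntegrable 0 L)]
    rw [spatial_main hy β α δ L s hb0 hbL hb1L]
    have h2 : ∫ x in (0:ℝ)..L, 2 * ((starRingEnd ℂ) (y x s) * (-Complex.I * g (x, s))).re
        = 2 * (-Complex.I * Q s).re := by
      have e1 : ∀ x : ℝ, (starRingEnd ℂ) (y x s) * (-Complex.I * g (x, s))
          = -Complex.I * ((starRingEnd ℂ) (y x s) * g (x, s)) := fun x => by ring
      simp_rw [e1]
      rw [intervalIntegral.integral_const_mul,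
        intervalIntegral_re (g := fun x => -Complex.I * ((starRingEnd ℂ) (y x s) * g (x, s)))
          (continuous_const.mul (cc0.mul cg)),
        intervalIntegral.integral_const_mul]
    rw [h2, hPdef]
    ring
  -- Step C
  have hIcont : Continuous (fun s => 2 * (-Complex.I * Q s).re) :=
    continuous_const.mul (Complex.continuous_re.comp (continuous_const.mul hQcont))
  have stepC : ∀ t ∈ Set.Icc (0:ℝ) T,
      E t + β * (∫ s in (0:ℝ)..t, P s) = ∫ s in (0:ℝ)..t, 2 * (-Complex.I * Q s).re := by
    intro t ht
    have h1 : (∫ s in (0:ℝ)..t, W s)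
        = ∫ s in (0:ℝ)..t, (2 * (-Complex.I * Q s).re - β * P s) := by
      apply intervalIntegral.integral_congr_ae
      have hmu : ∀ᵐ s : ℝ, s ≠ T := by
        rw [ae_iff]; simpa using volume_singleton (a := T)
      filter_upwards [hmu] with s hsne hsmem
      rw [Set.uIoc_of_le ht.1] at hsmem
      exact stepB s ⟨hsmem.1, lt_of_le_of_ne (le_trans hsmem.2 ht.2) hsne⟩
    have hPi : IntervalIntegrable (fun s => β * P s) volume 0 t :=
      (continuous_const.mul hPcont).intervalIntegrable 0 t
    have h2 : (∫ s in (0:ℝ)..t, β * P s) = β * ∫ s in (0:ℝ)..t, P s :=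
      intervalIntegral.integral_const_mul _ _
    rw [stepA t ht, h1, intervalIntegral.integral_sub (hIcont.intervalIntegrable 0 t) hPi, h2]
    ring
  -- Step D : pointwise Cauchy–Schwarz bound
  have stepD : ∀ s, 2 * (-Complex.I * Q s).re
      ≤ 2 * (Real.sqrt (E s) * Real.sqrt (FF s)) := by
    intro s
    have c0 : Continuous (fun x => y x s) := slice1_cont hyc s
    have cg : Continuous (fun x => g (x, s)) := hgc.comp (continuous_id.prodMk continuous_const)
    have h1 : (-Complex.I * Q s).re ≤ ‖Q s‖ := by
      calc (-Complex.I * Q s).re ≤ ‖-Complex.I * Q s‖ := Complex.re_le_norm _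
        _ = ‖Q s‖ := by rw [norm_mul]; simp
    have h2 : ‖Q s‖
        ≤ ∫ x in (0:ℝ)..L, ‖y x s‖ * ‖g (x, s)‖ := by
      rw [hQdef]
      have hn : ‖∫ x in (0:ℝ)..L, (starRingEnd ℂ) (y x s) * g (x, s)‖
          ≤ ∫ x in (0:ℝ)..L, ‖(starRingEnd ℂ) (y x s) * g (x, s)‖ := by
        exact intervalIntegral.norm_integral_le_integral_norm hL.le
      refine le_trans hn (le_of_eq ?_)
      congr 1; funext x
      rw [norm_mul, RCLike.norm_conj]
    have h3 := cauchy_schwarz_box (a := fun x => ‖y x s‖)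
      (b := fun x => ‖g (x, s)‖)
      (continuous_norm.comp c0) (continuous_norm.comp cg)
      (fun x => norm_nonneg _) (fun x => norm_nonneg _) hL.le
    have hEs : Real.sqrt (∫ x in (0:ℝ)..L, ‖y x s‖ ^ 2) = Real.sqrt (E s) := rfl
    have hFs : Real.sqrt (∫ x in (0:ℝ)..L, ‖g (x, s)‖ ^ 2)
        = Real.sqrt (FF s) := rfl
    rw [hEs, hFs] at h3
    linarith
  set M : ℝ := ∫ s in (0:ℝ)..T, Real.sqrt (FF s) with hMdef
  have hM0 : 0 ≤ M :=
    intervalIntegral.integral_nonneg hT.le (fun s _ => Real.sqrt_nonneg _)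
  obtain ⟨ts, htsmem, htsmax⟩ := isCompact_Icc.exists_isMaxOn
    (Set.nonempty_Icc.2 hT.le) hEcont.continuousOn
  set a : ℝ := Real.sqrt (E ts) with hadef
  have ha0 : 0 ≤ a := Real.sqrt_nonneg _
  have ha2 : a ^ 2 = E ts := Real.sq_sqrt (hE0 ts)
  -- Step E
  have stepE : ∀ t ∈ Set.Icc (0:ℝ) T,
      (∫ s in (0:ℝ)..t, 2 * (-Complex.I * Q s).re) ≤ 2 * a * M := by
    intro t ht
    have hsqF : Continuous (fun s => Real.sqrt (FF s)) := Real.continuous_sqrt.comp hFcont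
    have hb1 : (∫ s in (0:ℝ)..t, 2 * (-Complex.I * Q s).re)
        ≤ ∫ s in (0:ℝ)..t, 2 * a * Real.sqrt (FF s) := by
      apply intervalIntegral.integral_mono_on ht.1 (hIcont.intervalIntegrable 0 t)
        ((continuous_const.mul hsqF).intervalIntegrable 0 t)
      intro s hs
      show 2 * (-Complex.I * Q s).re ≤ 2 * a * Real.sqrt (FF s)
      have hsT : s ∈ Set.Icc (0:ℝ) T := ⟨hs.1, le_trans hs.2 ht.2⟩
      have hEle : E s ≤ E ts := htsmax hsT
      have hsq : Real.sqrt (E s) ≤ a := by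
        rw [hadef]; exact Real.sqrt_le_sqrt hEle
      have := stepD s
      have hF0s := Real.sqrt_nonneg (FF s)
      nlinarith [Real.sqrt_nonneg (E s)]
    have hb2 : (∫ s in (0:ℝ)..t, 2 * a * Real.sqrt (FF s)) = 2 * a * ∫ s in (0:ℝ)..t, Real.sqrt (FF s) :=
      intervalIntegral.integral_const_mul _ _
    have hb3 : (∫ s in (0:ℝ)..t, Real.sqrt (FF s)) ≤ M := by
      rw [hMdef]
      apply intervalIntegral.integral_mono_interval (le_refl (0:ℝ)) ht.1 ht.2
      · exact Filter.Eventually.of_forall fun s => Real.sqrt_nonneg _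
      · exact hsqF.intervalIntegrable 0 T
    calc (∫ s in (0:ℝ)..t, 2 * (-Complex.I * Q s).re)
        ≤ 2 * a * ∫ s in (0:ℝ)..t, Real.sqrt (FF s) := by rw [← hb2]; exact hb1
      _ ≤ 2 * a * M := by nlinarith
  -- numeric bounds
  have hPint : ∀ t, 0 ≤ t → 0 ≤ ∫ s in (0:ℝ)..t, P s := fun t ht =>
    intervalIntegral.integral_nonneg ht (fun s _ => hP0 s)
  have hEts : E ts ≤ 2 * a * M := by
    have h1 := stepC ts htsmem
    have h2 := stepE ts htsmem
    have h3 := hPint ts htsmem.1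
    nlinarith
  have haM : a ≤ 2 * M := by
    rcases eq_or_lt_of_le ha0 with h | h
    · linarith
    · have hmm : a * a ≤ (2 * M) * a := by nlinarith
      exact le_of_mul_le_mul_right hmm h
  have hEbound : ∀ t ∈ Set.Icc (0:ℝ) T, E t ≤ 4 * M ^ 2 := by
    intro t ht
    have hle : E t ≤ E ts := htsmax ht
    nlinarith [hEts, haM, hM0, ha0, mul_nonneg hM0 (sub_nonneg.2 haM)]
  have hβbound : β * (∫ s in (0:ℝ)..T, P s) ≤ 4 * M ^ 2 := by
    have h1 := stepC T ⟨hT.le, le_refl T⟩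
    have h2 := stepE T ⟨hT.le, le_refl T⟩
    have h3 := hE0 T
    nlinarith [mul_nonneg hM0 (sub_nonneg.2 haM)]
  haveI : Nonempty (Set.Icc (0:ℝ) T) := ⟨⟨0, le_refl 0, hT.le⟩⟩
  have hsup : (⨆ t : Set.Icc (0:ℝ) T, ∫ x in (0:ℝ)..L, ‖y x t.1‖ ^ 2)
      ≤ 4 * M ^ 2 := by
    apply ciSup_le
    intro t
    exact hEbound t.1 t.2
  have hMf : (∫ t in (0:ℝ)..T, Real.sqrt (∫ x in (0:ℝ)..L, ‖f x t‖ ^ 2)) = M := by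
    rw [hMdef]
    apply intervalIntegral.integral_congr
    intro s hs
    rw [Set.uIcc_of_le hT.le] at hs
    show Real.sqrt (∫ x in (0:ℝ)..L, ‖f x s‖ ^ 2) = Real.sqrt (FF s)
    have inner : (∫ x in (0:ℝ)..L, ‖f x s‖ ^ 2) = FF s := by
      rw [hFdef]
      apply intervalIntegral.integral_congr
      intro x hx
      rw [Set.uIcc_of_le hL.le] at hx
      show ‖f x s‖ ^ 2 = ‖g (x, s)‖ ^ 2
      rw [hgeq (x, s) ⟨hx, hs⟩]
      rfl
    exact congrArg Real.sqrt inner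
  rw [hMf]
  have hPfold : (∫ t in (0:ℝ)..T, ‖pd1 y 0 t‖ ^ 2) = ∫ s in (0:ℝ)..T, P s := rfl
  rw [hPfold]
  linarith [hsup, hβbound]
end
end
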